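/- If A ∈ Mₙ(ℂ) is Hermitian, then its diagonal vector diag(A) is majorized by its eigenvalue vector λ(A): diag(A) ≺ λ(A). -/

import Mathlib

/-- The sum of the `k` largest entries of `α`: the supremum of the sums of `α`
over subsets of cardinality `k`. -/
noncomputable def kLargestSum {n : ℕ} (α : Fin n → ℝ) (k : ℕ) : ℝ :=
  sSup {x : ℝ | ∃ s : Finset (Fin n), s.card = k ∧ x = ∑ i ∈ s, α i}

/-- Vector majorization `α ≺ β`. -/
def IsMajorizedBy {n : ℕ} (α β : Fin n → ℝ) : Prop :=
  (∀ k : ℕ, k ≤ n → kLargestSum α k ≤ kLargestSum β k) ∧ ∑ i, α i = ∑ i, β i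

/-!
If `A = U diag(λ) U*` with `U` unitary, then `Aᵢᵢ = ∑ⱼ |Uᵢⱼ|² λⱼ`, so `diag A = D λ` for the
doubly stochastic matrix `D = (|Uᵢⱼ|²)`. By Birkhoff's theorem `D` is a convex combination of
permutation matrices. For a permutation matrix, the sum of any `k` entries of `D λ` is a sum of
`k` eigenvalues, hence at most the sum of the `k` largest ones, and this bound, being linear
in `D`, survives convex combinations. The totals agree because `D` has unit column sums.
-/

open Finset Matrix

section Majorization

variable {n : ℕ}

lemma bddAbove_setOf_sum_card_eq (α : Fin n → ℝ) (k : ℕ) :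
    BddAbove {x : ℝ | ∃ s : Finset (Fin n), s.card = k ∧ x = ∑ i ∈ s, α i} :=
  ((Set.finite_range fun s : Finset (Fin n) => ∑ i ∈ s, α i).subset
    (by rintro x ⟨s, -, rfl⟩; exact ⟨s, rfl⟩)).bddAbove

lemma sum_le_kLargestSum (α : Fin n → ℝ) (s : Finset (Fin n)) :
    ∑ i ∈ s, α i ≤ kLargestSum α s.card :=
  le_csSup (bddAbove_setOf_sum_card_eq α _) ⟨s, rfl, rfl⟩

lemma kLargestSum_le {α : Fin n → ℝ} {k : ℕ} (hk : k ≤ n) {c : ℝ}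
    (h : ∀ s : Finset (Fin n), s.card = k → ∑ i ∈ s, α i ≤ c) : kLargestSum α k ≤ c := by
  obtain ⟨s, -, hs⟩ := exists_subset_card_eq (s := (univ : Finset (Fin n))) (by simpa using hk)
  exact csSup_le ⟨_, s, hs, rfl⟩ fun x ⟨s, hs, hx⟩ => hx ▸ h s hs

lemma sum_comp_perm_le_kLargestSum (α : Fin n → ℝ) (σ : Equiv.Perm (Fin n))
    (s : Finset (Fin n)) : ∑ i ∈ s, α (σ i) ≤ kLargestSum α s.card := by
  simpa [sum_map] using sum_le_kLargestSum α (s.map σ.toEmbedding)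

lemma sum_mulVec_le_kLargestSum {D : Matrix (Fin n) (Fin n) ℝ}
    (hD : D ∈ doublyStochastic ℝ (Fin n)) (β : Fin n → ℝ) (s : Finset (Fin n)) :
    ∑ i ∈ s, (D *ᵥ β) i ≤ kLargestSum β s.card := by
  have hlin : IsLinearMap ℝ fun M : Matrix (Fin n) (Fin n) ℝ => ∑ i ∈ s, (M *ᵥ β) i :=
    ⟨fun M N => by simp [add_mulVec, sum_add_distrib], fun r M => by simp [smul_mulVec, mul_sum]⟩
  rw [← SetLike.mem_coe, doublyStochastic_eq_convexHull_permMatrix] at hD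
  refine convexHull_min ?_ (convex_halfSpace_le hlin _) hD
  rintro _ ⟨σ, rfl⟩
  simpa [permMatrix_mulVec] using sum_comp_perm_le_kLargestSum β σ s

theorem isMajorizedBy_mulVec_of_mem_doublyStochastic {D : Matrix (Fin n) (Fin n) ℝ}
    (hD : D ∈ doublyStochastic ℝ (Fin n)) (β : Fin n → ℝ) : IsMajorizedBy (D *ᵥ β) β :=
  ⟨fun _ hk => kLargestSum_le hk fun s hs => hs ▸ sum_mulVec_le_kLargestSum hD β s,
    sum_mulVec_of_mem_doublyStochastic hD⟩

end Majorization

section Unitary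

variable {ι : Type*} [Fintype ι] [DecidableEq ι]

lemma sum_normSq_row_of_mem_unitaryGroup {U : Matrix ι ι ℂ} (hU : U ∈ unitaryGroup ι ℂ)
    (i : ι) : ∑ j, Complex.normSq (U i j) = 1 := by
  have h := congr_fun₂ (mem_unitaryGroup_iff.mp hU) i i
  simp only [mul_apply, star_apply, RCLike.star_def, Complex.mul_conj, one_apply_eq] at h
  exact_mod_cast h

lemma map_normSq_mem_doublyStochastic {U : Matrix ι ι ℂ} (hU : U ∈ unitaryGroup ι ℂ) :
    U.map Complex.normSq ∈ doublyStochastic ℝ ι := by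
  refine mem_doublyStochastic_iff_sum.mpr ⟨fun i j => Complex.normSq_nonneg _,
    sum_normSq_row_of_mem_unitaryGroup hU, fun j => ?_⟩
  simpa using sum_normSq_row_of_mem_unitaryGroup (Unitary.star_mem hU) j

lemma re_diag_mul_diagonal_mul_star (U : Matrix ι ι ℂ) (d : ι → ℝ) (i : ι) :
    ((U * diagonal (Complex.ofReal ∘ d) * star U) i i).re = (U.map Complex.normSq *ᵥ d) i := by
  have h (j : ι) : U i j * d j * star (U i j) = (Complex.normSq (U i j) * d j : ℝ) := by
    rw [mul_right_comm, RCLike.star_def, Complex.mul_conj, Complex.ofReal_mul]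
  rw [mul_apply]
  simp only [mul_diagonal, Function.comp_apply, star_apply, h, ← Complex.ofReal_sum,
    Complex.ofReal_re]
  rfl

end Unitary

/-- **Schur's theorem** (1923): the diagonal of a Hermitian matrix is majorized by
its eigenvalue vector. -/
theorem schur_theorem {n : ℕ} (A : Matrix (Fin n) (Fin n) ℂ) (hA : A.IsHermitian) :
    IsMajorizedBy (fun i => (A i i).re) hA.eigenvalues := by
  set U : Matrix (Fin n) (Fin n) ℂ := ↑hA.eigenvectorUnitary
  have hdiag : (fun i => (A i i).re) = U.map Complex.normSq *ᵥ hA.eigenvalues := by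
    ext i
    conv_lhs => rw [hA.spectral_theorem, Unitary.conjStarAlgAut_apply]
    exact re_diag_mul_diagonal_mul_star U _ i
  rw [hdiag]
  exact isMajorizedBy_mulVec_of_mem_doublyStochastic
    (map_normSq_mem_doublyStochastic hA.eigenvectorUnitary.2) _
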